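/- arXiv:2506.23346 — 5 statements merged into one kernel-verified Lean document; each statement's English description precedes it below -/
import Mathlib

section
/- Viability from MPC feasibility: for a state x, if for some natural number h there exists a control sequence u : ℕ → U with l (traj x u k) ≥ 0 for all k < h and traj x u h ∈ V, then x ∈ V. -/
def traj {X U : Type*} (f : X → U → X) (x : X) (u : ℕ → U) : ℕ → X
  | 0 => x
  | k + 1 => f (traj f x u k) (u k)

def viab {X U : Type*} (f : X → U → X) (l : X → ℝ) : Set X :=
  {x | ∃ u : ℕ → U, ∀ k : ℕ, l (traj f x u k) ≥ 0}

section Trajectory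

variable {X U : Type*} (f : X → U → X) (x : X)

theorem traj_congr {u v : ℕ → U} {n : ℕ} (huv : ∀ k < n, u k = v k) :
    traj f x u n = traj f x v n := by
  induction n with
  | zero => rfl
  | succ n ih =>
    rw [traj, traj, ih fun k hk => huv k (hk.trans n.lt_succ_self), huv n n.lt_succ_self]

theorem traj_add (u : ℕ → U) (h n : ℕ) :
    traj f x u (h + n) = traj f (traj f x u h) (fun k => u (h + k)) n := by
  induction n with
  | zero => rfl
  | succ n ih => rw [← Nat.add_assoc, traj, traj, ih]

def splice (h : ℕ) (u v : ℕ → U) : ℕ → U :=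
  fun k => if k < h then u k else v (k - h)

theorem splice_add (h : ℕ) (u v : ℕ → U) (n : ℕ) : splice h u v (h + n) = v n := by
  simp [splice]

variable {f x}

theorem traj_splice_of_le {h k : ℕ} (u v : ℕ → U) (hk : k ≤ h) :
    traj f x (splice h u v) k = traj f x u k :=
  traj_congr f x fun _ hj => if_pos (hj.trans_le hk)

theorem traj_splice_add (h : ℕ) (u v : ℕ → U) (n : ℕ) :
    traj f x (splice h u v) (h + n) = traj f (traj f x u h) v n := by
  rw [traj_add, traj_splice_of_le u v le_rfl]
  simp only [splice_add]

end Trajectory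

theorem viable_of_mpc_feasible {X U : Type*} (f : X → U → X) (l : X → ℝ)
    (x : X) (h : ℕ)
    (hfeas : ∃ u : ℕ → U, (∀ k < h, l (traj f x u k) ≥ 0) ∧ traj f x u h ∈ viab f l) :
    x ∈ viab f l := by
  obtain ⟨u, hsafe, v, hviable⟩ := hfeas
  refine ⟨splice h u v, fun k => ?_⟩
  rcases lt_or_ge k h with hk | hk
  · rw [traj_splice_of_le u v hk.le]
    exact hsafe k hk
  · obtain ⟨n, rfl⟩ := Nat.exists_eq_add_of_le hk
    rw [traj_splice_add]
    exact hviable n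
end

section
/- Intermediate states of a feasible MPC solution are viable: if a control sequence u : ℕ → U satisfies l (traj x u k) ≥ 0 for all k < h and traj x u h ∈ V, then traj x u j ∈ V for every j ≤ h. -/
section

variable {X U : Type*} (f : X → U → X)

theorem traj_cons_succ (x : X) (a : U) (u : Stream' U) (k : ℕ) :
    traj f x (Stream'.cons a u) (k + 1) = traj f (f x a) u k := by
  induction k with
  | zero => rfl
  | succ k ih => exact congrArg (f · (u k)) ih

theorem mem_viab_of_step {l : X → ℝ} {x : X} (hx : l x ≥ 0) {a : U}
    (hnext : f x a ∈ viab f l) : x ∈ viab f l := by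
  obtain ⟨u, hu⟩ := hnext
  refine ⟨Stream'.cons a u, fun k => ?_⟩
  cases k with
  | zero => exact hx
  | succ k => exact (traj_cons_succ f x a u k).symm ▸ hu k

end

theorem intermediate_states_viable {X U : Type*} (f : X → U → X) (l : X → ℝ)
    (x : X) (u : ℕ → U) (h : ℕ)
    (hrun : ∀ k < h, l (traj f x u k) ≥ 0) (hterm : traj f x u h ∈ viab f l) :
    ∀ j ≤ h, traj f x u j ∈ viab f l := by
  intro j hj
  induction hj using Nat.decreasingInduction with
  | self => exact hterm
  | of_succ k hk ih => exact mem_viab_of_step f (hrun k hk) ih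
end

section
/- Maximality of the viability kernel: if a set S ⊆ X satisfies, for every x ∈ S, that l x ≥ 0 and there exists u : U with f x u ∈ S, then S ⊆ V. Hence V contains every safe control-invariant set. -/
/-!
Pick a feedback law `σ : X → U` that keeps `S` invariant. The closed-loop orbit of a point of `S`
then never leaves `S`, where `l ≥ 0`, and the open-loop controls `k ↦ σ (xₖ)` read off along that
orbit realize it as a trajectory.
-/

section

variable {X U : Type*}

def closedLoop (f : X → U → X) (σ : X → U) : X → X :=
  fun x => f x (σ x)

theorem traj_closedLoop (f : X → U → X) (σ : X → U) (x : X) (k : ℕ) :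
    traj f x (fun j => σ ((closedLoop f σ)^[j] x)) k = (closedLoop f σ)^[k] x := by
  induction k with
  | zero => rfl
  | succ k ih => rw [traj, ih, Function.iterate_succ_apply']; rfl

theorem exists_mapsTo_closedLoop [Nonempty U] (f : X → U → X) {S : Set X}
    (hS : ∀ x ∈ S, ∃ u : U, f x u ∈ S) : ∃ σ : X → U, Set.MapsTo (closedLoop f σ) S S := by
  choose! σ hσ using hS
  exact ⟨σ, hσ⟩

theorem mem_viab_of_mapsTo_closedLoop (f : X → U → X) (l : X → ℝ) {S : Set X} {σ : X → U}
    (hσ : Set.MapsTo (closedLoop f σ) S S) (hl : ∀ x ∈ S, l x ≥ 0) {x : X} (hx : x ∈ S) :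
    x ∈ viab f l :=
  ⟨fun j => σ ((closedLoop f σ)^[j] x), fun k => by
    rw [traj_closedLoop]
    exact hl _ (hσ.iterate k hx)⟩

end

theorem viab_maximal {X U : Type*} (f : X → U → X) (l : X → ℝ)
    (S : Set X) (hS : ∀ x ∈ S, l x ≥ 0 ∧ ∃ u : U, f x u ∈ S) :
    S ⊆ viab f l := by
  intro x hx
  have : Nonempty U := ⟨(hS x hx).2.choose⟩
  obtain ⟨σ, hσ⟩ := exists_mapsTo_closedLoop f fun y hy => (hS y hy).2
  exact mem_viab_of_mapsTo_closedLoop f l hσ (fun y hy => (hS y hy).1) hx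
end

section
/- The viability kernel is the greatest post-fixed point of the safety predecessor operator: defining Φ : Set X → Set X by Φ S = {x | l x ≥ 0 ∧ ∃ u : U, f x u ∈ S}, one has Φ V = V, and every set S with S ⊆ Φ S satisfies S ⊆ V. -/
/-- The safety predecessor operator. -/
def Phi {X U : Type*} (f : X → U → X) (l : X → ℝ) (S : Set X) : Set X :=
  {x | l x ≥ 0 ∧ ∃ u : U, f x u ∈ S}

/-! A viable state is one that is safe and has a control leading to a viable state, which is the
fixed-point equation. Conversely, if `S ⊆ Φ S`, selecting at each state of `S` a control that
keeps it in `S` gives a feedback law whose closed-loop orbits never leave `S`, hence stay safe. -/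

section Viability

variable {X U : Type*} (f : X → U → X) (l : X → ℝ)

theorem traj_succ_eq_traj_tail (x : X) (u : ℕ → U) (k : ℕ) :
    traj f x u (k + 1) = traj f (f x (u 0)) (fun n => u (n + 1)) k := by
  induction k with
  | zero => rfl
  | succ k ih => simp only [traj] at ih ⊢; rw [ih]

theorem Phi_viab : Phi f l (viab f l) = viab f l := by
  ext x
  constructor
  · rintro ⟨hx, u₀, w, hw⟩
    refine ⟨fun k => Nat.casesOn k u₀ w, fun k => ?_⟩
    cases k with
    | zero => exact hx
    | succ k => rw [traj_succ_eq_traj_tail]; exact hw k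
  · rintro ⟨u, hu⟩
    refine ⟨hu 0, u 0, fun n => u (n + 1), fun k => ?_⟩
    rw [← traj_succ_eq_traj_tail]
    exact hu (k + 1)

theorem traj_feedback (c : X → U) (x : X) (k : ℕ) :
    traj f x (fun n => c ((fun y => f y (c y))^[n] x)) k = (fun y => f y (c y))^[k] x := by
  induction k with
  | zero => rfl
  | succ k ih => rw [traj, ih, Function.iterate_succ_apply']

theorem subset_viab_of_mapsTo (S : Set X) (hsafe : ∀ x ∈ S, l x ≥ 0) (c : X → U)
    (hc : Set.MapsTo (fun y => f y (c y)) S S) : S ⊆ viab f l := by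
  intro x hx
  refine ⟨fun n => c ((fun y => f y (c y))^[n] x), fun k => ?_⟩
  rw [traj_feedback]
  exact hsafe _ (hc.iterate k hx)

theorem subset_viab_of_subset_Phi (S : Set X) (hS : S ⊆ Phi f l S) : S ⊆ viab f l := by
  intro x hx
  have : Nonempty U := ⟨(hS hx).2.choose⟩
  have hsel : ∀ y, ∃ u, y ∈ S → f y u ∈ S := fun y => by
    by_cases hy : y ∈ S
    · exact (hS hy).2.imp fun _ h _ => h
    · exact ⟨Classical.arbitrary U, fun h => absurd h hy⟩
  choose c hc using hsel
  exact subset_viab_of_mapsTo f l S (fun y hy => (hS hy).1) c (fun y hy => hc y hy) hx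

end Viability

theorem viab_greatest_post_fixed_point {X U : Type*} (f : X → U → X) (l : X → ℝ) :
    Phi f l (viab f l) = viab f l ∧
    ∀ S : Set X, S ⊆ Phi f l S → S ⊆ viab f l :=
  ⟨Phi_viab f l, subset_viab_of_subset_Phi f l⟩
end

section
/- Explicit sup-min formula for the finite-horizon safety value function: for every K : ℕ and x : X, V_K x = ⨆ (u : ℕ → U), min over k ∈ {0, 1, ..., K} of l (traj x u k). -/
noncomputable def safetyVal {X U : Type*} (f : X → U → X) (l : X → ℝ) : ℕ → X → ℝ
  | 0, x => l x
  | K + 1, x => min (l x) (⨆ u : U, safetyVal f l K (f x u))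

theorem Finset.inf'_range_add_one' {α : Type*} [SemilatticeInf α] (g : ℕ → α) (n : ℕ) :
    (range (n + 1 + 1)).inf' nonempty_range_add_one g =
      g 0 ⊓ (range (n + 1)).inf' nonempty_range_add_one (fun k => g (k + 1)) := by
  simp only [range_add_one' (n + 1)]
  rw [inf'_insert (H := by simp), inf'_map]
  rfl

theorem min_ciSup {α ι : Type*} [ConditionallyCompleteLinearOrder α] [TopologicalSpace α]
    [OrderTopology α] [Nonempty ι] (c : α) {g : ι → α} (hg : BddAbove (Set.range g)) :
    min c (⨆ i, g i) = ⨆ i, min c (g i) :=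
  Monotone.map_ciSup_of_continuousAt (continuous_const.min continuous_id).continuousAt
    (fun _ _ h => min_le_min le_rfl h) hg

def seqConsEquiv (U : Type*) : U × (ℕ → U) ≃ (ℕ → U) where
  toFun p n := Nat.casesOn n p.1 p.2
  invFun u := (u 0, fun n => u (n + 1))
  left_inv _ := rfl
  right_inv u := funext fun n => by cases n <;> rfl

theorem ciSup_seq_eq_ciSup_head_ciSup_tail {α U : Type*} [ConditionallyCompleteLattice α]
    (G : U → (ℕ → U) → α) (hG : BddAbove (Set.range (Function.uncurry G))) :
    ⨆ u : ℕ → U, G (u 0) (fun n => u (n + 1)) = ⨆ a, ⨆ u, G a u := by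
  rw [← (seqConsEquiv U).iSup_comp]
  exact ciSup_prod hG

section Safety

variable {X U : Type*} (f : X → U → X) (l : X → ℝ)

theorem safetyVal_le (K : ℕ) (x : X) : safetyVal f l K x ≤ l x := by
  cases K
  · exact le_rfl
  · exact min_le_left _ _

noncomputable def trajMin (K : ℕ) (x : X) (u : ℕ → U) : ℝ :=
  (Finset.range (K + 1)).inf' Finset.nonempty_range_add_one fun k => l (traj f x u k)

theorem trajMin_le (K : ℕ) (x : X) (u : ℕ → U) : trajMin f l K x u ≤ l x :=
  Finset.inf'_le _ (Finset.mem_range.2 K.succ_pos)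

theorem trajMin_succ (K : ℕ) (x : X) (u : ℕ → U) :
    trajMin f l (K + 1) x u = min (l x) (trajMin f l K (f x (u 0)) fun n => u (n + 1)) := by
  simp only [trajMin, Finset.inf'_range_add_one', traj_succ_eq_traj_tail]
  rfl

end Safety

theorem safetyVal_sup_min {X U : Type*} [Nonempty U] (f : X → U → X) (l : X → ℝ)
    (hbdd : ∃ M : ℝ, ∀ x : X, l x ≤ M) (K : ℕ) (x : X) :
    safetyVal f l K x =
      ⨆ u : ℕ → U, (Finset.range (K + 1)).inf' (by simp) (fun k => l (traj f x u k)) := by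
  change safetyVal f l K x = ⨆ u, trajMin f l K x u
  obtain ⟨M, hM⟩ := hbdd
  induction K generalizing x with
  | zero => simp [safetyVal, trajMin, traj]
  | succ K ih =>
    calc safetyVal f l (K + 1) x
        = min (l x) (⨆ a, safetyVal f l K (f x a)) := rfl
      _ = ⨆ a, ⨆ u, min (l x) (trajMin f l K (f x a) u) := by
        rw [min_ciSup _ ⟨M, Set.forall_mem_range.2 fun a =>
          (safetyVal_le f l K _).trans (hM _)⟩]
        refine iSup_congr fun a => ?_
        rw [ih, min_ciSup _ ⟨M, Set.forall_mem_range.2 fun u =>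
          (trajMin_le f l K _ u).trans (hM _)⟩]
      _ = ⨆ u, trajMin f l (K + 1) x u := by
        simp only [trajMin_succ]
        exact (ciSup_seq_eq_ciSup_head_ciSup_tail _
          ⟨l x, Set.forall_mem_range.2 fun _ => min_le_left _ _⟩).symm
end
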